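/- For every weighted digraph Γ, the group inverse L^# of the Kirchhoff matrix can be obtained as the entrywise limit L^# = lim_{τ→∞} τ·(Q(τ) − J̄), where Q(τ) = (I + τL)^{−1}; that is, τ·((I + τL)^{−1} − J̄) converges entrywise, as τ → ∞, to (L + J̄)^{−1} − J̄. -/

import Mathlib

open Matrix BigOperators Filter

/-- An out forest of the weighted digraph with arc-weight matrix `ε`:
a set of arcs (pairs with positive weight), every vertex has at most one
incoming arc, and there is no directed cycle. -/
def IsOutForest {n : ℕ} (ε : Fin n → Fin n → ℝ) (F : Finset (Fin n × Fin n)) : Prop :=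
  (∀ p ∈ F, 0 < ε p.1 p.2) ∧
  (∀ u u' v : Fin n, (u, v) ∈ F → (u', v) ∈ F → u = u') ∧
  ¬ ∃ (k : ℕ) (f : ℕ → Fin n), 0 < k ∧ f 0 = f k ∧ ∀ i < k, (f i, f (i + 1)) ∈ F

/-- The weight of a forest: the product of the weights of its arcs. -/
noncomputable def forestWeight {n : ℕ} (ε : Fin n → Fin n → ℝ)
    (F : Finset (Fin n × Fin n)) : ℝ :=
  ∏ p ∈ F, ε p.1 p.2

/-- `σ_k`: the total weight of the out forests with exactly `k` arcs. -/
noncomputable def sigmaW {n : ℕ} (ε : Fin n → Fin n → ℝ) (k : ℕ) : ℝ :=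
  ∑ᶠ F ∈ {F : Finset (Fin n × Fin n) | IsOutForest ε F ∧ F.card = k}, forestWeight ε F

/-- `Q_k`: the matrix whose `(i,j)` entry is the total weight of out forests with `k`
arcs in which `j` has no incoming arc and `i` is reachable from `j` along arcs of `F`. -/
noncomputable def QMat {n : ℕ} (ε : Fin n → Fin n → ℝ) (k : ℕ) :
    Matrix (Fin n) (Fin n) ℝ :=
  Matrix.of fun i j =>
    ∑ᶠ F ∈ {F : Finset (Fin n × Fin n) | IsOutForest ε F ∧ F.card = k ∧
        (∀ u, (u, j) ∉ F) ∧ Relation.ReflTransGen (fun a b => (a, b) ∈ F) j i},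
      forestWeight ε F

/-- `n − v`: the maximum number of arcs in an out forest. -/
noncomputable def maxForestCard {n : ℕ} (ε : Fin n → Fin n → ℝ) : ℕ :=
  sSup {k | ∃ F : Finset (Fin n × Fin n), IsOutForest ε F ∧ F.card = k}

/-- The Kirchhoff matrix: `l i j = -ε j i` for `j ≠ i`, `l i i = Σ_{k ≠ i} ε k i`. -/
noncomputable def kirchhoff {n : ℕ} (ε : Fin n → Fin n → ℝ) : Matrix (Fin n) (Fin n) ℝ :=
  Matrix.of fun i j =>
    if i = j then ∑ k ∈ Finset.univ.filter (· ≠ i), ε k i else -(ε j i)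

/-- The normalized matrix of maximum out forests `J̄ = σ_{n−v}⁻¹ Q_{n−v}`. -/
noncomputable def Jbar {n : ℕ} (ε : Fin n → Fin n → ℝ) : Matrix (Fin n) (Fin n) ℝ :=
  (sigmaW ε (maxForestCard ε))⁻¹ • QMat ε (maxForestCard ε)


open Relation Finset

open Relation

section Chains
variable {α : Type*} {r r' : α → α → Prop}

def RChain (r : α → α → Prop) (k : ℕ) (f : ℕ → α) : Prop := ∀ i < k, r (f i) (f (i+1))

lemma rchain_reflTransGen :
    ∀ (k : ℕ) (f : ℕ → α), RChain r k f → ReflTransGen r (f 0) (f k) := by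
  intro k
  induction k with
  | zero => intro f _; exact .refl
  | succ k ih =>
    intro f h
    exact (ih f (fun i hi => h i (Nat.lt_succ_of_lt hi))).tail (h k (Nat.lt_succ_self k))

lemma reflTransGen_rchain {a b : α} (h : ReflTransGen r a b) :
    ∃ k f, f 0 = a ∧ f k = b ∧ RChain r k f := by
  induction h with
  | refl => exact ⟨0, fun _ => a, rfl, rfl, fun i hi => absurd hi (Nat.not_lt_zero i)⟩
  | @tail b c hab hbc ih =>
    obtain ⟨k, f, h0, hk, hc⟩ := ih
    refine ⟨k+1, fun m => if m = k+1 then c else f m, by simp [h0], by simp, ?_⟩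
    intro i hi
    rcases Nat.lt_succ_iff_lt_or_eq.mp hi with hi' | rfl
    · have h1 : i ≠ k + 1 := by omega
      have h2 : i + 1 ≠ k + 1 := by omega
      simp only [h1, h2, if_false]
      exact hc i hi'
    · have h1 : i ≠ i + 1 := by omega
      simp only [h1, if_false, if_pos rfl, hk]
      exact hbc

/-- paths can avoid arcs pointing back to the start -/
lemma reach_avoid {a : α} :
    ∀ (k : ℕ) (f : ℕ → α) (b : α), f 0 = a → f k = b → RChain r k f →
      ReflTransGen (fun x y => r x y ∧ y ≠ a) a b := by
  intro k
  induction k using Nat.strong_induction_on with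
  | _ k ih =>
    intro f b h0 hk hc
    by_cases h : ∃ p, 0 < p ∧ p ≤ k ∧ f p = a
    · obtain ⟨p, hp0, hpk, hpa⟩ := h
      exact ih (k - p) (by omega) (fun m => f (p + m)) b (by simpa using hpa)
        (by have : p + (k - p) = k := by omega
            simpa [this] using hk)
        (fun i hi => by
          have := hc (p + i) (by omega)
          simpa [Nat.add_assoc] using this)
    · push_neg at h
      have : RChain (fun x y => r x y ∧ y ≠ a) k f := by
        intro i hi
        refine ⟨hc i hi, ?_⟩
        exact h (i+1) (by omega) (by omega)
      have := rchain_reflTransGen k f this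
      rwa [h0, hk] at this

lemma reach_avoid' {a b : α} (h : ReflTransGen r a b) :
    ReflTransGen (fun x y => r x y ∧ y ≠ a) a b := by
  obtain ⟨k, f, h0, hk, hc⟩ := reflTransGen_rchain h
  exact reach_avoid k f b h0 hk hc

/-- cycle condition in terms of TransGen -/
lemma cycle_iff_transGen :
    (∃ (k : ℕ) (f : ℕ → α), 0 < k ∧ f 0 = f k ∧ ∀ i < k, r (f i) (f (i+1)))
      ↔ ∃ x, TransGen r x x := by
  constructor
  · rintro ⟨k, f, hk, hf, hc⟩
    refine ⟨f 0, ?_⟩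
    have h1 : r (f 0) (f 1) := hc 0 hk
    have h2 : ReflTransGen r (f 1) (f k) := by
      have := rchain_reflTransGen (k-1) (fun m => f (1+m))
        (fun i hi => by have := hc (1+i) (by omega); simpa [Nat.add_assoc] using this)
      simpa [show 1 + (k-1) = k by omega] using this
    have := TransGen.head' h1 h2
    rwa [← hf] at this
  · rintro ⟨x, hx⟩
    obtain ⟨y, hxy, hyx⟩ := TransGen.tail'_iff.mp hx
    obtain ⟨k, f, h0, hk, hc⟩ := reflTransGen_rchain hxy
    refine ⟨k+1, fun m => if m = k+1 then x else f m, by omega, by simp [h0], ?_⟩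
    intro i hi
    rcases Nat.lt_succ_iff_lt_or_eq.mp hi with hi' | rfl
    · have h1 : i ≠ k + 1 := by omega
      have h2 : i + 1 ≠ k + 1 := by omega
      simp only [h1, h2, if_false]
      exact hc i hi'
    · have h1 : i ≠ i + 1 := by omega
      simp only [h1, if_false, if_pos rfl, hk]
      exact hyx

/-- merging paths in a graph with unique in-arcs -/
lemma reach_merge (hU : ∀ u u' v, r u v → r u' v → u = u') {t a : α}
    (ha : ReflTransGen r a t) : ∀ b, ReflTransGen r b t →
      ReflTransGen r a b ∨ ReflTransGen r b a := by
  refine ReflTransGen.head_induction_on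
    (motive := fun x _ => ∀ b, ReflTransGen r b t → ReflTransGen r x b ∨ ReflTransGen r b x)
    ha ?_ ?_
  · intro b hb; exact Or.inr hb
  · intro x c hxc hct ih b hb
    rcases ih b hb with h1 | h1
    · exact Or.inl (ReflTransGen.head hxc h1)
    · rcases ReflTransGen.cases_tail h1 with rfl | ⟨d, hbd, hdc⟩
      · exact Or.inl (ReflTransGen.single hxc)
      · have hd : d = x := hU d x c hdc hxc
        exact Or.inr (hd ▸ hbd)

/-- adding one arc (t,i) to an acyclic graph where i can't reach t stays acyclic -/
lemma transGen_union_aux {t i : α} {x y : α}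
    (h : TransGen (fun a b => r a b ∨ (a = t ∧ b = i)) x y) :
    TransGen r x y ∨ (ReflTransGen r x t ∧
      ReflTransGen (fun a b => r a b ∨ (a = t ∧ b = i)) i y) := by
  refine TransGen.head_induction_on
    (motive := fun z _ => TransGen r z y ∨ (ReflTransGen r z t ∧
      ReflTransGen (fun a b => r a b ∨ (a = t ∧ b = i)) i y)) h ?_ ?_
  · intro a h
    rcases h with h | ⟨rfl, rfl⟩
    · exact Or.inl (TransGen.single h)
    · exact Or.inr ⟨.refl, .refl⟩
  · intro a c h hcy ih
    rcases h with h | ⟨rfl, rfl⟩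
    · rcases ih with h1 | ⟨h1, h2⟩
      · exact Or.inl (TransGen.head h h1)
      · exact Or.inr ⟨ReflTransGen.head h h1, h2⟩
    · refine Or.inr ⟨.refl, ?_⟩
      rcases ih with h1 | ⟨_, h2⟩
      · exact ReflTransGen.mono (fun a b h => Or.inl h) _ _ (TransGen.to_reflTransGen h1)
      · exact h2

lemma no_cycle_union {t i : α}
    (hF : ∀ x, ¬ TransGen r x x) (hreach : ¬ ReflTransGen r i t) :
    ∀ x, ¬ TransGen (fun a b => r a b ∨ (a = t ∧ b = i)) x x := by
  intro x hx
  rcases transGen_union_aux hx with h1 | ⟨h1, h2⟩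
  · exact hF x h1
  · -- i reaches x (in the bigger graph), x reaches t in r; so i reaches t in bigger graph
    have hit : ReflTransGen (fun a b => r a b ∨ (a = t ∧ b = i)) i t :=
      h2.trans (ReflTransGen.mono (fun a b h => Or.inl h) _ _ h1)
    -- strip arcs into i
    have := reach_avoid' hit
    have : ReflTransGen r i t := ReflTransGen.mono (fun a b h => by
      rcases h with ⟨h | ⟨rfl, rfl⟩, hb⟩
      · exact h
      · exact absurd rfl hb) _ _ this
    exact hreach this
end Chains

section Forests
attribute [local instance] Classical.propDecidable
variable {n : ℕ} {ε : Fin n → Fin n → ℝ}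

def arcRel (F : Finset (Fin n × Fin n)) : Fin n → Fin n → Prop := fun a b => (a, b) ∈ F

abbrev Reach (F : Finset (Fin n × Fin n)) (a b : Fin n) : Prop := ReflTransGen (arcRel F) a b

lemma isOutForest_iff (F : Finset (Fin n × Fin n)) :
    IsOutForest ε F ↔ (∀ p ∈ F, 0 < ε p.1 p.2) ∧
      (∀ u u' v : Fin n, (u, v) ∈ F → (u', v) ∈ F → u = u') ∧
      ∀ x, ¬ TransGen (arcRel F) x x := by
  unfold IsOutForest
  rw [show (∃ (k : ℕ) (f : ℕ → Fin n), 0 < k ∧ f 0 = f k ∧ ∀ i < k, (f i, f (i + 1)) ∈ F)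
      ↔ ∃ x, TransGen (arcRel F) x x from cycle_iff_transGen (r := arcRel F), not_exists]

namespace IsOutForest
variable {F G : Finset (Fin n × Fin n)}

lemma wpos (h : IsOutForest ε F) : ∀ p ∈ F, 0 < ε p.1 p.2 := h.1
lemma uniq (h : IsOutForest ε F) : ∀ u u' v : Fin n, (u, v) ∈ F → (u', v) ∈ F → u = u' := h.2.1
lemma nocyc (h : IsOutForest ε F) : ∀ x, ¬ TransGen (arcRel F) x x :=
  ((isOutForest_iff (ε := ε) F).mp h).2.2

lemma of_parts' (h1 : ∀ p ∈ F, 0 < ε p.1 p.2)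
    (h2 : ∀ u u' v : Fin n, (u, v) ∈ F → (u', v) ∈ F → u = u')
    (h3 : ∀ x, ¬ TransGen (arcRel F) x x) : IsOutForest ε F :=
  (isOutForest_iff (ε := ε) F).mpr ⟨h1, h2, h3⟩

lemma subset (hFG : F ⊆ G) (h : IsOutForest ε G) : IsOutForest ε F :=
  of_parts' (fun p hp => h.wpos p (hFG hp)) (fun u u' v hu hu' => h.uniq u u' v (hFG hu) (hFG hu'))
    (fun x hx => h.nocyc x (TransGen.mono (fun _ _ hh => hFG hh) _ _ hx))

lemma no_loop (h : IsOutForest ε F) (i : Fin n) : (i, i) ∉ F := fun hmem =>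
  h.nocyc i (TransGen.single hmem)

lemma not_reach_of_arc (h : IsOutForest ε F) {t i : Fin n} (hti : (t, i) ∈ F) :
    ¬ Reach F i t := fun hr => h.nocyc i (TransGen.tail' hr hti)

lemma weight_pos (h : IsOutForest ε F) : 0 < forestWeight ε F :=
  Finset.prod_pos (fun p hp => h.wpos p hp)

end IsOutForest

lemma reach_mono {F G : Finset (Fin n × Fin n)} (hFG : F ⊆ G) {a b : Fin n}
    (h : Reach F a b) : Reach G a b := ReflTransGen.mono (fun _ _ hh => hFG hh) _ _ h

/-- a path that never goes through `i` survives deleting an arc into `i` -/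
lemma reach_erase_into {F : Finset (Fin n × Fin n)} {u i a b : Fin n}
    (hib : ¬ Reach F i b) (hab : Reach F a b) : Reach (F.erase (u, i)) a b := by
  refine ReflTransGen.head_induction_on
    (motive := fun x _ => Reach (F.erase (u, i)) x b) hab .refl ?_
  intro x c hxc hcb ih
  have hc : c ≠ i := fun hc => hib (hc ▸ hcb)
  refine ReflTransGen.head ?_ ih
  show (x, c) ∈ F.erase (u, i)
  exact Finset.mem_erase.mpr ⟨by simp [Prod.ext_iff, hc], hxc⟩

/-- any reach path can avoid arcs pointing into its start -/
lemma reach_avoid_start {F : Finset (Fin n × Fin n)} {a b : Fin n} (h : Reach F a b) :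
    ReflTransGen (fun x y => (x, y) ∈ F ∧ y ≠ a) a b := reach_avoid' h

/-- extracting the last arc of a nontrivial reach -/
lemma reach_last_arc {F : Finset (Fin n × Fin n)} (h : IsOutForest ε F) {j i : Fin n}
    (hji : Reach F j i) (hij : j ≠ i) :
    ∃ t, (t, i) ∈ F ∧ Reach (F.erase (t, i)) j t := by
  rcases ReflTransGen.cases_tail hji with heq | ⟨t, hjt, hti⟩
  · exact absurd heq.symm hij
  · refine ⟨t, hti, reach_erase_into ?_ hjt⟩
    exact h.not_reach_of_arc hti

/-- inserting an arc `(t,i)` into a forest where `i` has no in-arc and `i` cannot reach `t` -/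
lemma IsOutForest.insert_arc {F : Finset (Fin n × Fin n)} (h : IsOutForest ε F) {t i : Fin n}
    (hε : 0 < ε t i) (hno : ∀ u, (u, i) ∉ F) (hreach : ¬ Reach F i t) :
    IsOutForest ε (insert (t, i) F) := by
  refine IsOutForest.of_parts' ?_ ?_ ?_
  · intro p hp
    rcases Finset.mem_insert.mp hp with rfl | hp
    · exact hε
    · exact h.wpos p hp
  · intro u u' v hu hu'
    rcases Finset.mem_insert.mp hu with hu1 | hu1 <;>
      rcases Finset.mem_insert.mp hu' with hu2 | hu2
    · injection hu1 with h1 h2; injection hu2 with h3 h4; rw [h1, h3]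
    · injection hu1 with h1 h2; subst h2; exact absurd hu2 (hno u')
    · injection hu2 with h1 h2; subst h2; exact absurd hu1 (hno u)
    · exact h.uniq u u' v hu1 hu2
  · have hequiv : ∀ x y, arcRel (insert (t, i) F) x y ↔
        (arcRel F x y ∨ (x = t ∧ y = i)) := by
      intro x y
      show (x, y) ∈ insert (t, i) F ↔ _
      rw [Finset.mem_insert, Prod.ext_iff]
      tauto
    intro x hx
    have := TransGen.mono (fun a b hab => (hequiv a b).mp hab) _ _ hx
    exact no_cycle_union h.nocyc hreach x this

/-- the in-neighbour (parent) of a vertex -/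
noncomputable def par (F : Finset (Fin n × Fin n)) (i : Fin n) : Fin n :=
  if h : ∃ u, (u, i) ∈ F then h.choose else i

lemma par_mem {F : Finset (Fin n × Fin n)} {i : Fin n} (h : ∃ u, (u, i) ∈ F) :
    (par F i, i) ∈ F := by
  rw [par, dif_pos h]; exact h.choose_spec

lemma par_eq {F : Finset (Fin n × Fin n)} (hF : IsOutForest ε F) {u i : Fin n}
    (h : (u, i) ∈ F) : par F i = u :=
  hF.uniq _ _ _ (par_mem ⟨u, h⟩) h

end Forests

section Sums
attribute [local instance] Classical.propDecidable
open Finset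
variable {n : ℕ} (ε : Fin n → Fin n → ℝ)

noncomputable def FF (k : ℕ) : Finset (Finset (Fin n × Fin n)) :=
  univ.filter (fun F => IsOutForest ε F ∧ F.card = k)

noncomputable def QS (k : ℕ) (i j : Fin n) : Finset (Finset (Fin n × Fin n)) :=
  univ.filter (fun F => IsOutForest ε F ∧ F.card = k ∧ (∀ u, (u, j) ∉ F) ∧ Reach F j i)

variable {ε}

lemma mem_FF {k : ℕ} {F : Finset (Fin n × Fin n)} :
    F ∈ FF ε k ↔ IsOutForest ε F ∧ F.card = k := by simp [FF]

lemma mem_QS {k : ℕ} {i j : Fin n} {F : Finset (Fin n × Fin n)} :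
    F ∈ QS ε k i j ↔ IsOutForest ε F ∧ F.card = k ∧ (∀ u, (u, j) ∉ F) ∧ Reach F j i := by
  simp [QS]

lemma sigmaW_eq (k : ℕ) : sigmaW ε k = ∑ F ∈ FF ε k, forestWeight ε F := by
  rw [sigmaW, ← finsum_mem_coe_finset]
  congr 1
  ext F
  simp [FF]

lemma QMat_eq (k : ℕ) (i j : Fin n) :
    QMat ε k i j = ∑ F ∈ QS ε k i j, forestWeight ε F := by
  rw [QMat, ← finsum_mem_coe_finset]
  show ∑ᶠ F ∈ _, forestWeight ε F = _
  congr 1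
  ext F
  simp only [QS, Finset.coe_filter, Set.mem_setOf_eq, Finset.mem_univ, true_and]
  rfl

end Sums

section Bijections
attribute [local instance] Classical.propDecidable
open Finset
variable {n : ℕ} {ε : Fin n → Fin n → ℝ}

/-- E1: forests of k+1 arcs reaching `i` from `j`  ↔  (arc into i) + forest where i is a fresh root -/
lemma E1 {i j : Fin n} (hij : i ≠ j) (k : ℕ) :
    ∑ G ∈ QS ε (k+1) i j, forestWeight ε G
      = ∑ p ∈ ((univ.filter (fun t => t ≠ i)).sigma (fun t => QS ε k t j)).filter
          (fun p => 0 < ε p.1 i ∧ ¬ Reach p.2 i p.1 ∧ ∀ u, (u, i) ∉ p.2),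
          ε p.1 i * forestWeight ε p.2 := by
  refine Finset.sum_bij' (fun G _ => ⟨par G i, G.erase (par G i, i)⟩)
    (fun p _ => insert (p.1, i) p.2) ?_ ?_ ?_ ?_ ?_
  · -- forward membership
    intro G hG
    obtain ⟨hfor, hcard, hnoj, hreach⟩ := mem_QS.mp hG
    obtain ⟨t, hti, hrt⟩ := reach_last_arc hfor hreach (Ne.symm hij)
    have hpar : par G i = t := par_eq hfor hti
    simp only [hpar]
    have htne : t ≠ i := fun h => hfor.no_loop i (h ▸ hti)
    refine Finset.mem_filter.mpr ⟨Finset.mem_sigma.mpr ⟨by simp [htne], ?_⟩, ?_, ?_, ?_⟩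
    · refine mem_QS.mpr ⟨hfor.subset (Finset.erase_subset _ _), ?_, ?_, hrt⟩
      · rw [Finset.card_erase_of_mem hti, hcard]; omega
      · intro u hu
        exact hnoj u (Finset.mem_of_mem_erase hu)
    · exact hfor.wpos (t, i) hti
    · intro hr
      exact hfor.not_reach_of_arc hti (reach_mono (Finset.erase_subset _ _) hr)
    · intro u hu
      have := hfor.uniq u t i (Finset.mem_of_mem_erase hu) hti
      rw [this] at hu
      exact (Finset.mem_erase.mp hu).1 rfl
  · -- backward membership
    intro p hp
    obtain ⟨hsig, hpos, hnr, hnoi⟩ := Finset.mem_filter.mp hp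
    obtain ⟨ht, hQ⟩ := Finset.mem_sigma.mp hsig
    obtain ⟨hfor, hcard, hnoj, hreach⟩ := mem_QS.mp hQ
    refine mem_QS.mpr ⟨hfor.insert_arc hpos hnoi hnr, ?_, ?_, ?_⟩
    · rw [Finset.card_insert_of_notMem (hnoi p.1), hcard]
    · intro u hu
      rcases Finset.mem_insert.mp hu with h | h
      · injection h with h1 h2; exact hij h2.symm
      · exact hnoj u h
    · exact (reach_mono (Finset.subset_insert _ _) hreach).tail (Finset.mem_insert_self _ _)
  · -- left inverse
    intro G hG
    obtain ⟨hfor, hcard, hnoj, hreach⟩ := mem_QS.mp hG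
    obtain ⟨t, hti, hrt⟩ := reach_last_arc hfor hreach (Ne.symm hij)
    have hpar : par G i = t := par_eq hfor hti
    simp only [hpar]
    exact Finset.insert_erase hti
  · -- right inverse
    intro p hp
    obtain ⟨hsig, hpos, hnr, hnoi⟩ := Finset.mem_filter.mp hp
    obtain ⟨ht, hQ⟩ := Finset.mem_sigma.mp hsig
    obtain ⟨hfor, hcard, hnoj, hreach⟩ := mem_QS.mp hQ
    have hforI := hfor.insert_arc hpos hnoi hnr
    have hpar : par (insert (p.1, i) p.2) i = p.1 :=
      par_eq hforI (Finset.mem_insert_self _ _)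
    simp only [hpar, Finset.erase_insert (hnoi p.1)]
  · -- weights
    intro G hG
    obtain ⟨hfor, hcard, hnoj, hreach⟩ := mem_QS.mp hG
    obtain ⟨t, hti, hrt⟩ := reach_last_arc hfor hreach (Ne.symm hij)
    have hpar : par G i = t := par_eq hfor hti
    simp only [hpar]
    exact (Finset.mul_prod_erase G _ hti).symm

lemma noIn_erase {F : Finset (Fin n × Fin n)} (hfor : IsOutForest ε F) {s i : Fin n}
    (hsi : (s, i) ∈ F) : ∀ u, (u, i) ∉ F.erase (s, i) := by
  intro u hu
  have := hfor.uniq u s i (Finset.mem_of_mem_erase hu) hsi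
  rw [this] at hu
  exact (Finset.mem_erase.mp hu).1 rfl

lemma reach_insert_start {G : Finset (Fin n × Fin n)} {t i x : Fin n}
    (h : Reach (insert (t, i) G) i x) : Reach G i x := by
  refine ReflTransGen.mono (fun a b hab => ?_) _ _ (reach_avoid_start h)
  rcases Finset.mem_insert.mp hab.1 with he | hm
  · injection he with h1 h2
    exact absurd h2 hab.2
  · exact hm

/-- E2: the swap bijection -/
lemma E2 {i j : Fin n} (hij : i ≠ j) (k : ℕ) :
    ∑ p ∈ ((univ.filter (fun t => t ≠ i)).sigma (fun _ => QS ε k i j)).filter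
        (fun p => 0 < ε p.1 i ∧ ¬ Reach p.2 i p.1),
        ε p.1 i * forestWeight ε p.2
    = ∑ p ∈ ((univ.filter (fun t => t ≠ i)).sigma (fun t => QS ε k t j)).filter
        (fun p => 0 < ε p.1 i ∧ ¬ Reach p.2 i p.1 ∧ ∃ u, (u, i) ∈ p.2),
        ε p.1 i * forestWeight ε p.2 := by
  refine Finset.sum_bij'
    (fun p _ => ⟨par p.2 i, insert (p.1, i) (p.2.erase (par p.2 i, i))⟩)
    (fun p _ => ⟨par p.2 i, insert (p.1, i) (p.2.erase (par p.2 i, i))⟩) ?_ ?_ ?_ ?_ ?_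
  · -- forward membership
    intro p hp
    obtain ⟨hsig, hpos, hnr⟩ := Finset.mem_filter.mp hp
    obtain ⟨ht, hQ⟩ := Finset.mem_sigma.mp hsig
    have htne : p.1 ≠ i := by simpa using ht
    obtain ⟨hfor, hcard, hnoj, hreach⟩ := mem_QS.mp hQ
    obtain ⟨s, hsi, hrs⟩ := reach_last_arc hfor hreach (Ne.symm hij)
    have hpar : par p.2 i = s := par_eq hfor hsi
    have hsne : s ≠ i := fun h => hfor.no_loop i (h ▸ hsi)
    have hkpos : 0 < k := hcard ▸ Finset.card_pos.mpr ⟨(s, i), hsi⟩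
    have hnotmem : (p.1, i) ∉ p.2.erase (s, i) := noIn_erase hfor hsi p.1
    have herfor : IsOutForest ε (p.2.erase (s, i)) := hfor.subset (Finset.erase_subset _ _)
    have hF'for : IsOutForest ε (insert (p.1, i) (p.2.erase (s, i))) :=
      herfor.insert_arc hpos (noIn_erase hfor hsi)
        (fun h => hnr (reach_mono (Finset.erase_subset _ _) h))
    simp only [hpar]
    refine Finset.mem_filter.mpr ⟨Finset.mem_sigma.mpr ⟨by simp [hsne], ?_⟩, ?_, ?_, ?_⟩
    · refine mem_QS.mpr ⟨hF'for, ?_, ?_, ?_⟩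
      · rw [Finset.card_insert_of_notMem hnotmem, Finset.card_erase_of_mem hsi, hcard]
        omega
      · intro u hu
        rcases Finset.mem_insert.mp hu with h | h
        · injection h with h1 h2; exact hij h2.symm
        · exact hnoj u (Finset.mem_of_mem_erase h)
      · exact reach_mono (Finset.subset_insert _ _) hrs
    · exact hfor.wpos (s, i) hsi
    · intro hr
      exact hfor.not_reach_of_arc hsi
        (reach_mono (Finset.erase_subset _ _) (reach_insert_start hr))
    · exact ⟨p.1, Finset.mem_insert_self _ _⟩
  · -- backward membership
    intro p hp
    obtain ⟨hsig, hpos, hnr, hex⟩ := Finset.mem_filter.mp hp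
    obtain ⟨ht, hQ⟩ := Finset.mem_sigma.mp hsig
    have htne : p.1 ≠ i := by simpa using ht
    obtain ⟨hfor, hcard, hnoj, hreach⟩ := mem_QS.mp hQ
    have htmem : (par p.2 i, i) ∈ p.2 := par_mem hex
    set t' := par p.2 i with hpar
    have htne' : t' ≠ i := fun h => hfor.no_loop i (h ▸ htmem)
    have hkpos : 0 < k := hcard ▸ Finset.card_pos.mpr ⟨(t', i), htmem⟩
    have hnotmem : (p.1, i) ∉ p.2.erase (t', i) := noIn_erase hfor htmem p.1
    have herfor : IsOutForest ε (p.2.erase (t', i)) := hfor.subset (Finset.erase_subset _ _)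
    have hFfor : IsOutForest ε (insert (p.1, i) (p.2.erase (t', i))) :=
      herfor.insert_arc hpos (noIn_erase hfor htmem)
        (fun h => hnr (reach_mono (Finset.erase_subset _ _) h))
    refine Finset.mem_filter.mpr ⟨Finset.mem_sigma.mpr ⟨by simp [htne'], ?_⟩, ?_, ?_⟩
    · refine mem_QS.mpr ⟨hFfor, ?_, ?_, ?_⟩
      · rw [Finset.card_insert_of_notMem hnotmem, Finset.card_erase_of_mem htmem, hcard]
        omega
      · intro u hu
        rcases Finset.mem_insert.mp hu with h | h
        · injection h with h1 h2; exact hij h2.symm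
        · exact hnoj u (Finset.mem_of_mem_erase h)
      · -- Reach F j i
        have h1 : Reach (p.2.erase (t', i)) j p.1 := reach_erase_into hnr hreach
        exact (reach_mono (Finset.subset_insert _ _) h1).tail (Finset.mem_insert_self _ _)
    · exact hfor.wpos (t', i) htmem
    · intro hr
      exact hfor.not_reach_of_arc htmem
        (reach_mono (Finset.erase_subset _ _) (reach_insert_start hr))
  · -- left inverse
    intro p hp
    obtain ⟨hsig, hpos, hnr⟩ := Finset.mem_filter.mp hp
    obtain ⟨ht, hQ⟩ := Finset.mem_sigma.mp hsig
    obtain ⟨hfor, hcard, hnoj, hreach⟩ := mem_QS.mp hQ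
    obtain ⟨s, hsi, hrs⟩ := reach_last_arc hfor hreach (Ne.symm hij)
    have hpar : par p.2 i = s := par_eq hfor hsi
    have hnotmem : (p.1, i) ∉ p.2.erase (s, i) := noIn_erase hfor hsi p.1
    have herfor : IsOutForest ε (p.2.erase (s, i)) := hfor.subset (Finset.erase_subset _ _)
    have hF'for : IsOutForest ε (insert (p.1, i) (p.2.erase (s, i))) :=
      herfor.insert_arc hpos (noIn_erase hfor hsi)
        (fun h => hnr (reach_mono (Finset.erase_subset _ _) h))
    simp only [hpar]
    have hpar2 : par (insert (p.1, i) (p.2.erase (s, i))) i = p.1 :=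
      par_eq hF'for (Finset.mem_insert_self _ _)
    simp only [hpar2, Finset.erase_insert hnotmem, Finset.insert_erase hsi]
  · -- right inverse
    intro p hp
    obtain ⟨hsig, hpos, hnr, hex⟩ := Finset.mem_filter.mp hp
    obtain ⟨ht, hQ⟩ := Finset.mem_sigma.mp hsig
    obtain ⟨hfor, hcard, hnoj, hreach⟩ := mem_QS.mp hQ
    have htmem : (par p.2 i, i) ∈ p.2 := par_mem hex
    set t' := par p.2 i with hpar
    have hnotmem : (p.1, i) ∉ p.2.erase (t', i) := noIn_erase hfor htmem p.1
    have herfor : IsOutForest ε (p.2.erase (t', i)) := hfor.subset (Finset.erase_subset _ _)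
    have hFfor : IsOutForest ε (insert (p.1, i) (p.2.erase (t', i))) :=
      herfor.insert_arc hpos (noIn_erase hfor htmem)
        (fun h => hnr (reach_mono (Finset.erase_subset _ _) h))
    have hpar2 : par (insert (p.1, i) (p.2.erase (t', i))) i = p.1 :=
      par_eq hFfor (Finset.mem_insert_self _ _)
    simp only [hpar2, Finset.erase_insert hnotmem, Finset.insert_erase htmem]
  · -- weights
    intro p hp
    obtain ⟨hsig, hpos, hnr⟩ := Finset.mem_filter.mp hp
    obtain ⟨ht, hQ⟩ := Finset.mem_sigma.mp hsig
    obtain ⟨hfor, hcard, hnoj, hreach⟩ := mem_QS.mp hQ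
    obtain ⟨s, hsi, hrs⟩ := reach_last_arc hfor hreach (Ne.symm hij)
    have hpar : par p.2 i = s := par_eq hfor hsi
    have hnotmem : (p.1, i) ∉ p.2.erase (s, i) := noIn_erase hfor hsi p.1
    simp only [hpar]
    simp only [hpar, forestWeight]
    rw [Finset.prod_insert hnotmem, ← Finset.mul_prod_erase p.2 _ hsi]
    ring

end Bijections
section Bij2
attribute [local instance] Classical.propDecidable
open Finset
variable {n : ℕ} {ε : Fin n → Fin n → ℝ}

lemma reach_root {F : Finset (Fin n × Fin n)} (hfor : IsOutForest ε F) {i j t : Fin n}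
    (hnoj : ∀ u, (u, j) ∉ F) (hij : i ≠ j) (hjt : Reach F j t) (hit : Reach F i t) :
    Reach F j i := by
  rcases reach_merge hfor.uniq hit j hjt with h | h
  · rcases ReflTransGen.cases_tail h with heq | ⟨d, _, hdj⟩
    · exact absurd heq.symm hij
    · exact absurd hdj (hnoj d)
  · exact h

/-- E3: set equality between the `Reach p.2 i p.1` parts -/
lemma E3 {i j : Fin n} (hij : i ≠ j) (k : ℕ) :
    ((univ.filter (fun t => t ≠ i)).sigma (fun _ => QS ε k i j)).filter
        (fun p => 0 < ε p.1 i ∧ Reach p.2 i p.1)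
      = ((univ.filter (fun t => t ≠ i)).sigma (fun t => QS ε k t j)).filter
        (fun p => 0 < ε p.1 i ∧ Reach p.2 i p.1) := by
  ext p
  simp only [Finset.mem_filter, Finset.mem_sigma, mem_QS, Finset.mem_filter,
    Finset.mem_univ, true_and]
  constructor
  · rintro ⟨⟨ht, hfor, hcard, hnoj, hreach⟩, hpos, hR⟩
    exact ⟨⟨ht, hfor, hcard, hnoj, hreach.trans hR⟩, hpos, hR⟩
  · rintro ⟨⟨ht, hfor, hcard, hnoj, hreach⟩, hpos, hR⟩
    exact ⟨⟨ht, hfor, hcard, hnoj, reach_root hfor hnoj hij hreach hR⟩, hpos, hR⟩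

/-- E4: gluing an arc into the root `j` -/
lemma E4 {j : Fin n} (k : ℕ) :
    ∑ p ∈ ((univ.filter (fun t => t ≠ j)).sigma (fun _ => QS ε k j j)).filter
        (fun p => 0 < ε p.1 j ∧ ¬ Reach p.2 j p.1),
        ε p.1 j * forestWeight ε p.2
      = ∑ H ∈ (FF ε (k+1)).filter (fun H => ¬ ∀ u, (u, j) ∉ H), forestWeight ε H := by
  refine Finset.sum_bij' (fun p _ => insert (p.1, j) p.2)
    (fun H _ => ⟨par H j, H.erase (par H j, j)⟩) ?_ ?_ ?_ ?_ ?_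
  · intro p hp
    obtain ⟨hsig, hpos, hnr⟩ := Finset.mem_filter.mp hp
    obtain ⟨ht, hQ⟩ := Finset.mem_sigma.mp hsig
    obtain ⟨hfor, hcard, hnoj, _⟩ := mem_QS.mp hQ
    refine Finset.mem_filter.mpr ⟨mem_FF.mpr ⟨hfor.insert_arc hpos hnoj hnr, ?_⟩, ?_⟩
    · rw [Finset.card_insert_of_notMem (hnoj p.1), hcard]
    · intro hall
      exact hall p.1 (Finset.mem_insert_self _ _)
  · intro H hH
    obtain ⟨hFF, hex⟩ := Finset.mem_filter.mp hH
    obtain ⟨hfor, hcard⟩ := mem_FF.mp hFF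
    push_neg at hex
    obtain ⟨u, hu⟩ := hex
    have htmem : (par H j, j) ∈ H := par_mem ⟨u, hu⟩
    have htne : par H j ≠ j := fun h => hfor.no_loop j (by rw [h] at htmem; exact htmem)
    refine Finset.mem_filter.mpr ⟨Finset.mem_sigma.mpr ⟨by simp [htne], ?_⟩, ?_, ?_⟩
    · refine mem_QS.mpr ⟨hfor.subset (Finset.erase_subset _ _), ?_, noIn_erase hfor htmem, .refl⟩
      rw [Finset.card_erase_of_mem htmem, hcard]
      omega
    · exact hfor.wpos _ htmem
    · intro hr
      exact hfor.not_reach_of_arc htmem (reach_mono (Finset.erase_subset _ _) hr)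
  · intro p hp
    obtain ⟨hsig, hpos, hnr⟩ := Finset.mem_filter.mp hp
    obtain ⟨ht, hQ⟩ := Finset.mem_sigma.mp hsig
    obtain ⟨hfor, hcard, hnoj, _⟩ := mem_QS.mp hQ
    have hpar : par (insert (p.1, j) p.2) j = p.1 :=
      par_eq (hfor.insert_arc hpos hnoj hnr) (Finset.mem_insert_self _ _)
    simp only [hpar, Finset.erase_insert (hnoj p.1)]
  · intro H hH
    obtain ⟨hFF, hex⟩ := Finset.mem_filter.mp hH
    obtain ⟨hfor, hcard⟩ := mem_FF.mp hFF
    push_neg at hex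
    obtain ⟨u, hu⟩ := hex
    have htmem : (par H j, j) ∈ H := par_mem ⟨u, hu⟩
    simp only [Finset.insert_erase htmem]
  · intro p hp
    obtain ⟨hsig, hpos, hnr⟩ := Finset.mem_filter.mp hp
    obtain ⟨ht, hQ⟩ := Finset.mem_sigma.mp hsig
    obtain ⟨hfor, hcard, hnoj, _⟩ := mem_QS.mp hQ
    simp only [forestWeight]
    rw [Finset.prod_insert (hnoj p.1)]

/-- e5: for `i = j` the `Reach` part is all of the Y-side -/
lemma e5 {j : Fin n} (k : ℕ) :
    ((univ.filter (fun t => t ≠ j)).sigma (fun _ => QS ε k j j)).filter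
        (fun p => 0 < ε p.1 j ∧ Reach p.2 j p.1)
      = ((univ.filter (fun t => t ≠ j)).sigma (fun t => QS ε k t j)).filter
        (fun p => 0 < ε p.1 j) := by
  ext p
  simp only [Finset.mem_filter, Finset.mem_sigma, mem_QS, Finset.mem_univ, true_and]
  constructor
  · rintro ⟨⟨ht, hfor, hcard, hnoj, _⟩, hpos, hR⟩
    exact ⟨⟨ht, hfor, hcard, hnoj, hR⟩, hpos⟩
  · rintro ⟨⟨ht, hfor, hcard, hnoj, hR⟩, hpos⟩
    exact ⟨⟨ht, hfor, hcard, hnoj, .refl⟩, hpos, hR⟩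

/-- e6: `QS (k+1) j j` is the rooted forests -/
lemma e6 {j : Fin n} (k : ℕ) :
    QS ε k j j = (FF ε k).filter (fun H => ∀ u, (u, j) ∉ H) := by
  ext F
  simp only [mem_QS, Finset.mem_filter, mem_FF]
  constructor
  · rintro ⟨hfor, hcard, hnoj, _⟩
    exact ⟨⟨hfor, hcard⟩, hnoj⟩
  · rintro ⟨⟨hfor, hcard⟩, hnoj⟩
    exact ⟨hfor, hcard, hnoj, .refl⟩

end Bij2

section Assembly
attribute [local instance] Classical.propDecidable
open Finset
variable {n : ℕ} {ε : Fin n → Fin n → ℝ}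

lemma keySum (hnn : ∀ a b, 0 ≤ ε a b) (i j : Fin n) (k : ℕ) :
    (∑ G ∈ QS ε (k+1) i j, forestWeight ε G)
      + ∑ p ∈ (univ.filter (fun t => t ≠ i)).sigma (fun _ => QS ε k i j),
          ε p.1 i * forestWeight ε p.2
    = (if i = j then ∑ H ∈ FF ε (k+1), forestWeight ε H else 0)
      + ∑ p ∈ (univ.filter (fun t => t ≠ i)).sigma (fun t => QS ε k t j),
          ε p.1 i * forestWeight ε p.2 := by
  have hg0 : ∀ p : (_ : Fin n) × Finset (Fin n × Fin n),
      ¬ (0 < ε p.1 i) → ε p.1 i * forestWeight ε p.2 = 0 := by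
    intro p hp
    have : ε p.1 i = 0 := le_antisymm (not_lt.mp hp) (hnn _ _)
    rw [this, zero_mul]
  by_cases hij : i = j
  · subst hij
    -- X-side split
    have hX : ∑ p ∈ (univ.filter (fun t => t ≠ i)).sigma (fun _ => QS ε k i i),
          ε p.1 i * forestWeight ε p.2
        = (∑ p ∈ ((univ.filter (fun t => t ≠ i)).sigma (fun _ => QS ε k i i)).filter
            (fun p => 0 < ε p.1 i ∧ Reach p.2 i p.1), ε p.1 i * forestWeight ε p.2)
          + ∑ p ∈ ((univ.filter (fun t => t ≠ i)).sigma (fun _ => QS ε k i i)).filter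
            (fun p => 0 < ε p.1 i ∧ ¬ Reach p.2 i p.1), ε p.1 i * forestWeight ε p.2 := by
      rw [Finset.sum_filter, Finset.sum_filter, ← Finset.sum_add_distrib]
      apply Finset.sum_congr rfl
      intro p _
      by_cases h1 : 0 < ε p.1 i
      · by_cases h2 : Reach p.2 i p.1
        · rw [if_pos ⟨h1, h2⟩, if_neg (fun hc => hc.2 h2), add_zero]
        · rw [if_neg (fun hc => h2 hc.2), if_pos ⟨h1, h2⟩, zero_add]
      · rw [if_neg (fun hc => h1 hc.1), if_neg (fun hc => h1 hc.1), add_zero, hg0 p h1]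
    -- Y-side support
    have hY : ∑ p ∈ (univ.filter (fun t => t ≠ i)).sigma (fun t => QS ε k t i),
          ε p.1 i * forestWeight ε p.2
        = ∑ p ∈ ((univ.filter (fun t => t ≠ i)).sigma (fun t => QS ε k t i)).filter
            (fun p => 0 < ε p.1 i), ε p.1 i * forestWeight ε p.2 := by
      rw [Finset.sum_filter]
      apply Finset.sum_congr rfl
      intro p _
      by_cases h1 : 0 < ε p.1 i
      · rw [if_pos h1]
      · rw [if_neg h1, hg0 p h1]
    -- FF-side split
    have hF : ∑ H ∈ FF ε (k+1), forestWeight ε H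
        = (∑ H ∈ (FF ε (k+1)).filter (fun H => ∀ u, (u, i) ∉ H), forestWeight ε H)
          + ∑ H ∈ (FF ε (k+1)).filter (fun H => ¬ ∀ u, (u, i) ∉ H), forestWeight ε H := by
      rw [Finset.sum_filter, Finset.sum_filter, ← Finset.sum_add_distrib]
      apply Finset.sum_congr rfl
      intro H _
      by_cases h1 : ∀ u, (u, i) ∉ H
      · rw [if_pos h1, if_neg (fun hc => hc h1), add_zero]
      · rw [if_neg h1, if_pos h1, zero_add]
    have hQS : ∑ G ∈ QS ε (k+1) i i, forestWeight ε G
        = ∑ H ∈ (FF ε (k+1)).filter (fun H => ∀ u, (u, i) ∉ H), forestWeight ε H := by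
      rw [e6]
    rw [if_pos rfl, hX, hY, hF, hQS, ← e5, E4]
    ring
  · -- i ≠ j
    have hX : ∑ p ∈ (univ.filter (fun t => t ≠ i)).sigma (fun _ => QS ε k i j),
          ε p.1 i * forestWeight ε p.2
        = (∑ p ∈ ((univ.filter (fun t => t ≠ i)).sigma (fun _ => QS ε k i j)).filter
            (fun p => 0 < ε p.1 i ∧ Reach p.2 i p.1), ε p.1 i * forestWeight ε p.2)
          + ∑ p ∈ ((univ.filter (fun t => t ≠ i)).sigma (fun _ => QS ε k i j)).filter
            (fun p => 0 < ε p.1 i ∧ ¬ Reach p.2 i p.1), ε p.1 i * forestWeight ε p.2 := by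
      rw [Finset.sum_filter, Finset.sum_filter, ← Finset.sum_add_distrib]
      apply Finset.sum_congr rfl
      intro p _
      by_cases h1 : 0 < ε p.1 i
      · by_cases h2 : Reach p.2 i p.1
        · rw [if_pos ⟨h1, h2⟩, if_neg (fun hc => hc.2 h2), add_zero]
        · rw [if_neg (fun hc => h2 hc.2), if_pos ⟨h1, h2⟩, zero_add]
      · rw [if_neg (fun hc => h1 hc.1), if_neg (fun hc => h1 hc.1), add_zero, hg0 p h1]
    have hY : ∑ p ∈ (univ.filter (fun t => t ≠ i)).sigma (fun t => QS ε k t j),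
          ε p.1 i * forestWeight ε p.2
        = (∑ p ∈ ((univ.filter (fun t => t ≠ i)).sigma (fun t => QS ε k t j)).filter
            (fun p => 0 < ε p.1 i ∧ Reach p.2 i p.1), ε p.1 i * forestWeight ε p.2)
          + ((∑ p ∈ ((univ.filter (fun t => t ≠ i)).sigma (fun t => QS ε k t j)).filter
            (fun p => 0 < ε p.1 i ∧ ¬ Reach p.2 i p.1 ∧ ∃ u, (u, i) ∈ p.2),
            ε p.1 i * forestWeight ε p.2)
          + ∑ p ∈ ((univ.filter (fun t => t ≠ i)).sigma (fun t => QS ε k t j)).filter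
            (fun p => 0 < ε p.1 i ∧ ¬ Reach p.2 i p.1 ∧ ∀ u, (u, i) ∉ p.2),
            ε p.1 i * forestWeight ε p.2) := by
      rw [Finset.sum_filter, Finset.sum_filter, Finset.sum_filter,
        ← Finset.sum_add_distrib, ← Finset.sum_add_distrib]
      apply Finset.sum_congr rfl
      intro p _
      by_cases h1 : 0 < ε p.1 i
      · by_cases h2 : Reach p.2 i p.1
        · rw [if_pos ⟨h1, h2⟩, if_neg (fun hc => hc.2.1 h2), if_neg (fun hc => hc.2.1 h2)]
          ring
        · by_cases h3 : ∃ u, (u, i) ∈ p.2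
          · rw [if_neg (fun hc => h2 hc.2), if_pos ⟨h1, h2, h3⟩,
              if_neg (fun hc => hc.2.2 h3.choose h3.choose_spec)]
            ring
          · rw [if_neg (fun hc => h2 hc.2), if_neg (fun hc => h3 hc.2.2),
              if_pos ⟨h1, h2, not_exists.mp h3⟩]
            ring
      · rw [if_neg (fun hc => h1 hc.1), if_neg (fun hc => h1 hc.1),
          if_neg (fun hc => h1 hc.1), hg0 p h1]
        ring
    rw [hX, hY, E3 hij, E2 hij, ← E1 hij, if_neg hij]
    ring
end Assembly
section MatrixFacts
attribute [local instance] Classical.propDecidable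
open Finset
variable {n : ℕ} {ε : Fin n → Fin n → ℝ}

/-- F1: the fundamental recursion `L·Q_k + Q_{k+1} = σ_{k+1}·I` -/
lemma LQ_rec (hnn : ∀ a b, 0 ≤ ε a b) (k : ℕ) :
    kirchhoff ε * QMat ε k + QMat ε (k+1)
      = sigmaW ε (k+1) • (1 : Matrix (Fin n) (Fin n) ℝ) := by
  ext i j
  have key := keySum (ε := ε) hnn i j k
  rw [← Finset.sum_sigma' (univ.filter (fun t => t ≠ i)) (fun _ => QS ε k i j)
      (fun a b => ε a i * forestWeight ε b),
    ← Finset.sum_sigma' (univ.filter (fun t => t ≠ i)) (fun t => QS ε k t j)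
      (fun a b => ε a i * forestWeight ε b)] at key
  simp only [← Finset.mul_sum, ← QMat_eq, ← sigmaW_eq] at key
  rw [← Finset.sum_mul] at key
  rw [Matrix.add_apply, Matrix.mul_apply, Matrix.smul_apply, Matrix.one_apply, smul_eq_mul,
    mul_ite, mul_one, mul_zero]
  rw [← Finset.add_sum_erase Finset.univ (fun t => kirchhoff ε i t * QMat ε k t j)
    (Finset.mem_univ i)]
  have h1 : kirchhoff ε i i = ∑ t ∈ univ.filter (fun t => t ≠ i), ε t i := by
    simp [kirchhoff]
  have h2 : ∑ t ∈ univ.erase i, kirchhoff ε i t * QMat ε k t j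
      = - ∑ t ∈ univ.filter (fun t => t ≠ i), ε t i * QMat ε k t j := by
    rw [show (univ.filter (fun t => t ≠ i)) = univ.erase i from Finset.filter_ne' univ i]
    rw [← Finset.sum_neg_distrib]
    apply Finset.sum_congr rfl
    intro t ht
    have htne : ¬ (i = t) := fun h => (Finset.mem_erase.mp ht).1 h.symm
    simp [kirchhoff, htne]
  rw [h1, h2]
  linarith [key]

lemma bddAbove_forest_cards :
    BddAbove {k | ∃ F : Finset (Fin n × Fin n), IsOutForest ε F ∧ F.card = k} := by
  refine ⟨Fintype.card (Fin n × Fin n), ?_⟩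
  rintro k ⟨F, _, rfl⟩
  exact F.card_le_univ

lemma empty_isOutForest : IsOutForest ε ∅ := by
  refine ⟨?_, ?_, ?_⟩
  · intro p hp; simp at hp
  · intro u u' v hu hu'; simp at hu
  · rintro ⟨k, f, hk, hf, hc⟩
    have := hc 0 hk
    simp at this

lemma forest_card_le {F : Finset (Fin n × Fin n)} (hF : IsOutForest ε F) :
    F.card ≤ maxForestCard ε :=
  le_csSup bddAbove_forest_cards ⟨F, hF, rfl⟩

lemma maxCard_spec (ε : Fin n → Fin n → ℝ) :
    ∃ F : Finset (Fin n × Fin n), IsOutForest ε F ∧ F.card = maxForestCard ε := by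
  have h := Nat.sSup_mem (s := {k | ∃ F : Finset (Fin n × Fin n), IsOutForest ε F ∧ F.card = k})
    ⟨0, ⟨∅, empty_isOutForest, Finset.card_empty⟩⟩ bddAbove_forest_cards
  exact h

lemma FF_empty {k : ℕ} (h : maxForestCard ε < k) : FF ε k = ∅ := by
  rw [Finset.eq_empty_iff_forall_notMem]
  intro F hF
  obtain ⟨hfor, hcard⟩ := mem_FF.mp hF
  exact absurd (hcard ▸ forest_card_le hfor) (by omega)

lemma QS_empty {k : ℕ} {i j : Fin n} (h : maxForestCard ε < k) : QS ε k i j = ∅ := by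
  rw [Finset.eq_empty_iff_forall_notMem]
  intro F hF
  obtain ⟨hfor, hcard, _, _⟩ := mem_QS.mp hF
  exact absurd (hcard ▸ forest_card_le hfor) (by omega)

lemma sigmaW_eq_zero {k : ℕ} (h : maxForestCard ε < k) : sigmaW ε k = 0 := by
  rw [sigmaW_eq, FF_empty h, Finset.sum_empty]

lemma QMat_eq_zero {k : ℕ} (h : maxForestCard ε < k) : QMat ε k = 0 := by
  ext i j
  rw [QMat_eq, QS_empty h, Finset.sum_empty, Matrix.zero_apply]

lemma sigmaW_nonneg {k : ℕ} : 0 ≤ sigmaW ε k := by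
  rw [sigmaW_eq]
  exact Finset.sum_nonneg (fun F hF => (mem_FF.mp hF).1.weight_pos.le)

lemma sigmaW_max_pos : 0 < sigmaW ε (maxForestCard ε) := by
  rw [sigmaW_eq]
  obtain ⟨F, hF, hcard⟩ := maxCard_spec ε
  exact Finset.sum_pos (fun G hG => (mem_FF.mp hG).1.weight_pos)
    ⟨F, mem_FF.mpr ⟨hF, hcard⟩⟩

lemma FF_zero : FF ε 0 = {∅} := by
  ext F
  simp only [mem_FF, Finset.mem_singleton, Finset.card_eq_zero]
  constructor
  · rintro ⟨_, h⟩; exact h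
  · rintro rfl; exact ⟨empty_isOutForest, rfl⟩

lemma sigmaW_zero : sigmaW ε 0 = 1 := by
  rw [sigmaW_eq, FF_zero, Finset.sum_singleton, forestWeight, Finset.prod_empty]

lemma QMat_zero : QMat ε 0 = (1 : Matrix (Fin n) (Fin n) ℝ) := by
  ext i j
  rw [QMat_eq, Matrix.one_apply]
  by_cases h : i = j
  · subst h
    have : QS ε 0 i i = {∅} := by
      ext F
      simp only [mem_QS, Finset.mem_singleton, Finset.card_eq_zero]
      constructor
      · rintro ⟨_, h, _, _⟩; exact h
      · rintro rfl; exact ⟨empty_isOutForest, rfl, by simp, .refl⟩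
    rw [this, if_pos rfl, Finset.sum_singleton, forestWeight, Finset.prod_empty]
  · have : QS ε 0 i j = ∅ := by
      rw [Finset.eq_empty_iff_forall_notMem]
      intro F hF
      obtain ⟨_, hcard, _, hreach⟩ := mem_QS.mp hF
      rw [Finset.card_eq_zero] at hcard
      subst hcard
      rcases ReflTransGen.cases_head hreach with heq | ⟨c, hc, _⟩
      · exact h heq.symm
      · exact absurd hc (Finset.notMem_empty _)
    rw [this, if_neg h, Finset.sum_empty]
end MatrixFacts
section PolyAlg
attribute [local instance] Classical.propDecidable
open Finset
variable {n : ℕ} {ε : Fin n → Fin n → ℝ}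

noncomputable def Npoly (ε : Fin n → Fin n → ℝ) (τ : ℝ) : Matrix (Fin n) (Fin n) ℝ :=
  ∑ k ∈ range (maxForestCard ε + 1), τ^k • QMat ε k

noncomputable def dpoly (ε : Fin n → Fin n → ℝ) (τ : ℝ) : ℝ :=
  ∑ k ∈ range (maxForestCard ε + 1), τ^k * sigmaW ε k

/-- the matrix-forest identity `(I + τL) N(τ) = d(τ) I` -/
lemma NP (hnn : ∀ a b, 0 ≤ ε a b) (τ : ℝ) :
    (1 + τ • kirchhoff ε) * Npoly ε τ = dpoly ε τ • 1 := by
  set m := maxForestCard ε with hm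
  have hLN : kirchhoff ε * Npoly ε τ
      = ∑ k ∈ range (m+1), τ^k • (sigmaW ε (k+1) • (1 : Matrix (Fin n) (Fin n) ℝ)
          - QMat ε (k+1)) := by
    rw [Npoly, Finset.mul_sum]
    apply Finset.sum_congr rfl
    intro k _
    rw [Matrix.mul_smul]
    congr 1
    exact eq_sub_of_add_eq (LQ_rec (ε := ε) hnn k)
  have hQ : ∑ k ∈ range (m+1), (τ * τ^k) • QMat ε (k+1)
      = Npoly ε τ - 1 := by
    have h1 : ∑ k ∈ range (m+2), τ^k • QMat ε k
        = ∑ k ∈ range (m+1), τ^(k+1) • QMat ε (k+1) + (1 : Matrix (Fin n) (Fin n) ℝ) := by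
      rw [Finset.sum_range_succ' (fun k => τ^k • QMat ε k) (m+1)]
      simp [QMat_zero]
    have h2 : ∑ k ∈ range (m+2), τ^k • QMat ε k = Npoly ε τ := by
      rw [Finset.sum_range_succ, QMat_eq_zero (by omega), smul_zero, add_zero, Npoly]
    rw [h2] at h1
    have h3 : ∀ k, τ^(k+1) • QMat ε (k+1) = (τ * τ^k) • QMat ε (k+1) := by
      intro k; ring_nf
    rw [Finset.sum_congr rfl (fun k _ => h3 k)] at h1
    rw [h1]
    abel
  have hS : ∑ k ∈ range (m+1), (τ * τ^k) • (sigmaW ε (k+1) • (1 : Matrix (Fin n) (Fin n) ℝ))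
      = (dpoly ε τ - 1) • 1 := by
    have h1 : ∑ k ∈ range (m+2), (τ^k * sigmaW ε k) • (1 : Matrix (Fin n) (Fin n) ℝ)
        = ∑ k ∈ range (m+1), (τ^(k+1) * sigmaW ε (k+1)) • (1 : Matrix (Fin n) (Fin n) ℝ)
          + (1 : Matrix (Fin n) (Fin n) ℝ) := by
      rw [Finset.sum_range_succ' (fun k => (τ^k * sigmaW ε k) • (1 : Matrix (Fin n) (Fin n) ℝ)) (m+1)]
      simp [sigmaW_zero]
    have h2 : ∑ k ∈ range (m+2), (τ^k * sigmaW ε k) • (1 : Matrix (Fin n) (Fin n) ℝ)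
        = dpoly ε τ • 1 := by
      rw [Finset.sum_range_succ, sigmaW_eq_zero (by omega), mul_zero, zero_smul, add_zero,
        dpoly, ← Finset.sum_smul]
    rw [h2] at h1
    have h3 : ∀ k, (τ^(k+1) * sigmaW ε (k+1)) • (1 : Matrix (Fin n) (Fin n) ℝ)
        = (τ * τ^k) • (sigmaW ε (k+1) • (1 : Matrix (Fin n) (Fin n) ℝ)) := by
      intro k
      rw [smul_smul]
      ring_nf
    rw [Finset.sum_congr rfl (fun k _ => h3 k)] at h1
    rw [sub_smul, one_smul, h1]
    abel
  rw [add_mul, one_mul, smul_mul, hLN, Finset.smul_sum]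
  have h4 : ∀ k ∈ range (m+1), τ • τ^k • (sigmaW ε (k+1) • (1 : Matrix (Fin n) (Fin n) ℝ)
      - QMat ε (k+1)) = (τ * τ^k) • (sigmaW ε (k+1) • (1 : Matrix (Fin n) (Fin n) ℝ))
        - (τ * τ^k) • QMat ε (k+1) := by
    intro k _
    module
  rw [Finset.sum_congr rfl h4, Finset.sum_sub_distrib, hQ, hS]
  rw [sub_smul, one_smul]
  abel
end PolyAlg
section PolyAlg2
attribute [local instance] Classical.propDecidable
open Finset
variable {n : ℕ} {ε : Fin n → Fin n → ℝ}

lemma dpoly_pos {τ : ℝ} (hτ : 0 ≤ τ) : 0 < dpoly ε τ := by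
  have h1 : (1:ℝ) ≤ dpoly ε τ := by
    have := Finset.single_le_sum (f := fun k => τ^k * sigmaW ε k)
      (s := range (maxForestCard ε + 1))
      (fun k _ => mul_nonneg (pow_nonneg hτ k) sigmaW_nonneg)
      (Finset.mem_range.mpr (Nat.succ_pos _))
    simpa [sigmaW_zero, dpoly] using this
  linarith

lemma inv_eq_Npoly (hnn : ∀ a b, 0 ≤ ε a b) {τ : ℝ} (hτ : 0 ≤ τ) :
    (1 + τ • kirchhoff ε)⁻¹ = (dpoly ε τ)⁻¹ • Npoly ε τ := by
  apply Matrix.inv_eq_right_inv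
  rw [Matrix.mul_smul, NP hnn, smul_smul, inv_mul_cancel₀ (dpoly_pos hτ).ne', one_smul]

lemma A_mul_inv (hnn : ∀ a b, 0 ≤ ε a b) {τ : ℝ} (hτ : 0 ≤ τ) :
    (1 + τ • kirchhoff ε) * (1 + τ • kirchhoff ε)⁻¹ = 1 := by
  rw [inv_eq_Npoly hnn hτ, Matrix.mul_smul, NP hnn, smul_smul,
    inv_mul_cancel₀ (dpoly_pos hτ).ne', one_smul]

lemma NP' (hnn : ∀ a b, 0 ≤ ε a b) {τ : ℝ} (hτ : 0 ≤ τ) :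
    Npoly ε τ * (1 + τ • kirchhoff ε) = dpoly ε τ • 1 := by
  have h1 : ((dpoly ε τ)⁻¹ • Npoly ε τ) * (1 + τ • kirchhoff ε) = 1 := by
    rw [← inv_eq_Npoly hnn hτ]
    rw [mul_eq_one_comm.mp (A_mul_inv hnn hτ)]
  have h2 := congrArg (fun X => dpoly ε τ • X) h1
  simp only [Matrix.smul_mul, smul_smul, mul_inv_cancel₀ (dpoly_pos hτ).ne', one_smul] at h2
  rw [h2]

lemma L_mul_Qmax (hnn : ∀ a b, 0 ≤ ε a b) :
    kirchhoff ε * QMat ε (maxForestCard ε) = 0 := by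
  have h := LQ_rec (ε := ε) hnn (maxForestCard ε)
  rw [QMat_eq_zero (Nat.lt_succ_self _), sigmaW_eq_zero (Nat.lt_succ_self _)] at h
  simpa using h

lemma L_mul_Jbar (hnn : ∀ a b, 0 ≤ ε a b) : kirchhoff ε * Jbar ε = 0 := by
  rw [Jbar, Matrix.mul_smul, L_mul_Qmax hnn, smul_zero]

/-- extraction of coefficients from a polynomial identity on `[0,∞)` -/
lemma poly_extract {M : ℕ} (c : ℕ → ℝ)
    (h : ∀ τ : ℝ, 0 ≤ τ → ∑ k ∈ range M, c k * τ^k = 0) :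
    ∀ k, k < M → c k = 0 := by
  set P : Polynomial ℝ := ∑ k ∈ range M, Polynomial.C (c k) * Polynomial.X ^ k with hP
  have heval : ∀ τ : ℝ, 0 ≤ τ → P.eval τ = 0 := by
    intro τ hτ
    rw [hP]
    simp only [Polynomial.eval_finset_sum, Polynomial.eval_mul, Polynomial.eval_C,
      Polynomial.eval_pow, Polynomial.eval_X]
    exact h τ hτ
  have hP0 : P = 0 := by
    apply Polynomial.eq_zero_of_infinite_isRoot
    apply Set.Infinite.mono (s := Set.Ici (0:ℝ))
    · intro x hx
      exact heval x hx
    · exact Set.Ici_infinite 0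
  intro k hk
  have := congrArg (fun p => Polynomial.coeff p k) hP0
  simp only [hP, Polynomial.finset_sum_coeff, Polynomial.coeff_C_mul, Polynomial.coeff_X_pow,
    Polynomial.coeff_zero] at this
  rw [Finset.sum_eq_single k (fun b _ hb => by simp [Ne.symm hb]) (fun hb => absurd hk (by simpa using hb))] at this
  simpa using this

/-- matrix-valued version -/
lemma poly_extract_mat {M : ℕ} (D : ℕ → Matrix (Fin n) (Fin n) ℝ)
    (h : ∀ τ : ℝ, 0 ≤ τ → ∑ k ∈ range M, τ^k • D k = 0) :
    ∀ k, k < M → D k = 0 := by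
  intro k hk
  ext i j
  have := poly_extract (fun k => D k i j) (fun τ hτ => ?_) k hk
  · simpa using this
  · have h2 := congrArg (fun X : Matrix (Fin n) (Fin n) ℝ => X i j) (h τ hτ)
    simpa [Matrix.sum_apply, mul_comm] using h2
end PolyAlg2
section PolyAlg3
attribute [local instance] Classical.propDecidable
open Finset
variable {n : ℕ} {ε : Fin n → Fin n → ℝ}

lemma Qmax_mul_L (hnn : ∀ a b, 0 ≤ ε a b) :
    QMat ε (maxForestCard ε) * kirchhoff ε = 0 := by
  have key : ∀ τ : ℝ, 0 ≤ τ → ∑ k ∈ range (maxForestCard ε + 2), τ^k •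
      ((if k ≤ maxForestCard ε then QMat ε k else 0)
        + (if 1 ≤ k then QMat ε (k-1) * kirchhoff ε else 0)
        - (if k ≤ maxForestCard ε then sigmaW ε k else 0) • 1) = 0 := by
    intro τ hτ
    have hS1 : ∑ k ∈ range (maxForestCard ε + 2),
        τ^k • (if k ≤ maxForestCard ε then QMat ε k else 0) = Npoly ε τ := by
      rw [Finset.sum_range_succ, if_neg (by omega), smul_zero, add_zero, Npoly]
      exact Finset.sum_congr rfl (fun k hk => by
        rw [if_pos (by simpa [Nat.lt_succ_iff] using Finset.mem_range.mp hk)])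
    have hS2 : ∑ k ∈ range (maxForestCard ε + 2),
        τ^k • (if 1 ≤ k then QMat ε (k-1) * kirchhoff ε else 0)
          = Npoly ε τ * (τ • kirchhoff ε) := by
      rw [Finset.sum_range_succ'
        (fun k => τ^k • (if 1 ≤ k then QMat ε (k-1) * kirchhoff ε else 0)) (maxForestCard ε + 1)]
      rw [if_neg (by omega), smul_zero, add_zero, Npoly, Finset.sum_mul]
      exact Finset.sum_congr rfl (fun k hk => by
        rw [if_pos (by omega), Nat.add_sub_cancel, Matrix.smul_mul, Matrix.mul_smul,
          smul_smul, pow_succ])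
    have hS3 : ∑ k ∈ range (maxForestCard ε + 2),
        τ^k • ((if k ≤ maxForestCard ε then sigmaW ε k else 0) • (1 : Matrix (Fin n) (Fin n) ℝ))
          = dpoly ε τ • 1 := by
      rw [Finset.sum_range_succ, if_neg (by omega), zero_smul, smul_zero, add_zero]
      have h5 : ∀ k ∈ range (maxForestCard ε + 1),
          τ^k • ((if k ≤ maxForestCard ε then sigmaW ε k else 0) • (1 : Matrix (Fin n) (Fin n) ℝ))
            = (τ^k * sigmaW ε k) • (1 : Matrix (Fin n) (Fin n) ℝ) := by
        intro k hk
        rw [if_pos (by simpa [Nat.lt_succ_iff] using Finset.mem_range.mp hk), smul_smul]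
      rw [Finset.sum_congr rfl h5, ← Finset.sum_smul, dpoly]
    have expand : ∑ k ∈ range (maxForestCard ε + 2), τ^k •
        ((if k ≤ maxForestCard ε then QMat ε k else 0)
          + (if 1 ≤ k then QMat ε (k-1) * kirchhoff ε else 0)
          - (if k ≤ maxForestCard ε then sigmaW ε k else 0) • 1)
        = Npoly ε τ + Npoly ε τ * (τ • kirchhoff ε) - dpoly ε τ • 1 := by
      rw [← hS3, ← hS2, ← hS1, ← Finset.sum_add_distrib, ← Finset.sum_sub_distrib]
      exact Finset.sum_congr rfl (fun k _ => by simp only [smul_add, smul_sub])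
    rw [expand]
    have h6 := NP' (ε := ε) hnn hτ
    rw [mul_add, mul_one] at h6
    rw [h6]
    abel
  have hD1 := poly_extract_mat _ key (maxForestCard ε + 1) (by omega)
  have e1 : ¬ (maxForestCard ε + 1 ≤ maxForestCard ε) := by omega
  have e2 : (1:ℕ) ≤ maxForestCard ε + 1 := by omega
  simp only [if_neg e1, if_pos e2, Nat.add_sub_cancel] at hD1
  simpa using hD1

lemma Jbar_mul_L (hnn : ∀ a b, 0 ≤ ε a b) : Jbar ε * kirchhoff ε = 0 := by
  rw [Jbar, Matrix.smul_mul, Qmax_mul_L hnn, smul_zero]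

lemma Jbar_mul_N (hnn : ∀ a b, 0 ≤ ε a b) {τ : ℝ} (hτ : 0 ≤ τ) :
    Jbar ε * Npoly ε τ = dpoly ε τ • Jbar ε := by
  have hJA : Jbar ε * (1 + τ • kirchhoff ε) = Jbar ε := by
    rw [mul_add, mul_one, Matrix.mul_smul, Jbar_mul_L hnn, smul_zero, add_zero]
  have hN : Npoly ε τ = dpoly ε τ • (1 + τ • kirchhoff ε)⁻¹ := by
    rw [inv_eq_Npoly hnn hτ, smul_smul, mul_inv_cancel₀ (dpoly_pos hτ).ne', one_smul]
  have hJinv : Jbar ε * (1 + τ • kirchhoff ε)⁻¹ = Jbar ε := by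
    calc Jbar ε * (1 + τ • kirchhoff ε)⁻¹
        = (Jbar ε * (1 + τ • kirchhoff ε)) * (1 + τ • kirchhoff ε)⁻¹ := by rw [hJA]
      _ = Jbar ε * ((1 + τ • kirchhoff ε) * (1 + τ • kirchhoff ε)⁻¹) := by rw [mul_assoc]
      _ = Jbar ε := by rw [A_mul_inv hnn hτ, mul_one]
  rw [hN, Matrix.mul_smul, hJinv]

lemma Jbar_mul_Q (hnn : ∀ a b, 0 ≤ ε a b) {k : ℕ} (hk : k ≤ maxForestCard ε) :
    Jbar ε * QMat ε k = sigmaW ε k • Jbar ε := by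
  have key : ∀ τ : ℝ, 0 ≤ τ → ∑ l ∈ range (maxForestCard ε + 1), τ^l •
      (Jbar ε * QMat ε l - sigmaW ε l • Jbar ε) = 0 := by
    intro τ hτ
    have expand : ∑ l ∈ range (maxForestCard ε + 1), τ^l •
        (Jbar ε * QMat ε l - sigmaW ε l • Jbar ε)
        = Jbar ε * Npoly ε τ - dpoly ε τ • Jbar ε := by
      rw [Npoly, dpoly, Finset.mul_sum, Finset.sum_smul, ← Finset.sum_sub_distrib]
      exact Finset.sum_congr rfl (fun l _ => by
        rw [Matrix.mul_smul, smul_sub, smul_smul])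
    rw [expand, Jbar_mul_N hnn hτ, sub_self]
  have h := poly_extract_mat _ key k (by omega)
  exact sub_eq_zero.mp h

lemma Jbar_idem (hnn : ∀ a b, 0 ≤ ε a b) : Jbar ε * Jbar ε = Jbar ε := by
  have h := Jbar_mul_Q (ε := ε) hnn (le_refl (maxForestCard ε))
  calc Jbar ε * Jbar ε
      = (sigmaW ε (maxForestCard ε))⁻¹ • (Jbar ε * QMat ε (maxForestCard ε)) := by
        rw [Jbar, Matrix.mul_smul]
    _ = Jbar ε := by
        rw [h, smul_smul, inv_mul_cancel₀ sigmaW_max_pos.ne', one_smul]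
end PolyAlg3
section Invertible
attribute [local instance] Classical.propDecidable
open Finset
variable {n : ℕ} {ε : Fin n → Fin n → ℝ}

lemma singleton_isOutForest {t i : Fin n} (hne : t ≠ i) (hpos : 0 < ε t i) :
    IsOutForest ε {(t, i)} := by
  apply IsOutForest.of_parts'
  · intro p hp
    rw [Finset.mem_singleton] at hp
    subst hp
    exact hpos
  · intro u u' v hu hu'
    rw [Finset.mem_singleton] at hu hu'
    injection hu with h1 h2
    injection hu' with h3 h4
    rw [h1, h3]
  · have hempty : ∀ x : Fin n, ¬ TransGen (arcRel (∅ : Finset (Fin n × Fin n))) x x := by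
      intro x hx
      cases hx with
      | single h => exact absurd h (Finset.notMem_empty _)
      | tail _ h => exact absurd h (Finset.notMem_empty _)
    have hreach : ¬ ReflTransGen (arcRel (∅ : Finset (Fin n × Fin n))) i t := by
      intro h
      rcases ReflTransGen.cases_head h with heq | ⟨c, hc, _⟩
      · exact hne heq.symm
      · exact absurd hc (Finset.notMem_empty _)
    intro x hx
    have hmono : ∀ a b : Fin n, arcRel {(t, i)} a b →
        (arcRel (∅ : Finset (Fin n × Fin n)) a b ∨ (a = t ∧ b = i)) := by
      intro a b hab
      right
      have : (a, b) = (t, i) := Finset.mem_singleton.mp hab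
      injection this with h1 h2
      exact ⟨h1, h2⟩
    exact no_cycle_union hempty hreach x (TransGen.mono hmono _ _ hx)

lemma L_eq_zero_of_max_zero (hnn : ∀ a b, 0 ≤ ε a b) (h : maxForestCard ε = 0) :
    kirchhoff ε = 0 := by
  have hz : ∀ t i : Fin n, t ≠ i → ε t i = 0 := by
    intro t i hne
    by_contra hc
    have hpos : 0 < ε t i := lt_of_le_of_ne (hnn t i) (Ne.symm hc)
    have := forest_card_le (singleton_isOutForest hne hpos)
    rw [h, Finset.card_singleton] at this
    omega
  ext i j
  by_cases hij : i = j
  · subst hij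
    simp only [kirchhoff, Matrix.of_apply, if_pos rfl, Matrix.zero_apply]
    exact Finset.sum_eq_zero (fun t ht => hz t i (by simpa using (Finset.mem_filter.mp ht).2))
  · simp only [kirchhoff, Matrix.of_apply, if_neg hij, Matrix.zero_apply]
    rw [hz j i (fun hji => hij hji.symm), neg_zero]

lemma Jbar_eq_one_of_max_zero (h : maxForestCard ε = 0) :
    Jbar ε = (1 : Matrix (Fin n) (Fin n) ℝ) := by
  rw [Jbar, h, sigmaW_zero, QMat_zero, inv_one, one_smul]

/-- the right inverse of `L + J̄` -/
lemma LJ_right_inv (hnn : ∀ a b, 0 ≤ ε a b) :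
    ∃ X : Matrix (Fin n) (Fin n) ℝ, (kirchhoff ε + Jbar ε) * X = 1 := by
  rcases Nat.eq_zero_or_pos (maxForestCard ε) with h0 | hpos
  · refine ⟨1, ?_⟩
    rw [L_eq_zero_of_max_zero hnn h0, Jbar_eq_one_of_max_zero h0]
    simp
  · obtain ⟨m', hm'⟩ : ∃ m', maxForestCard ε = m' + 1 :=
      ⟨maxForestCard ε - 1, by omega⟩
    set σm := sigmaW ε (maxForestCard ε) with hσm
    have hσ : σm ≠ 0 := sigmaW_max_pos.ne'
    refine ⟨(σm⁻¹ * σm⁻¹) • (σm • QMat ε m' - sigmaW ε m' • QMat ε (maxForestCard ε))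
      + Jbar ε, ?_⟩
    have e1 : kirchhoff ε * QMat ε m' = σm • 1 - QMat ε (maxForestCard ε) := by
      have := LQ_rec (ε := ε) hnn m'
      rw [← hm'] at this
      exact eq_sub_of_add_eq this
    have e2 : kirchhoff ε * QMat ε (maxForestCard ε) = 0 := L_mul_Qmax hnn
    have e3 : Jbar ε * QMat ε m' = sigmaW ε m' • Jbar ε := Jbar_mul_Q hnn (by omega)
    have e4 : Jbar ε * QMat ε (maxForestCard ε) = σm • Jbar ε :=
      Jbar_mul_Q hnn (le_refl _)
    have e5 : kirchhoff ε * Jbar ε = 0 := L_mul_Jbar hnn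
    have e6 : Jbar ε * Jbar ε = Jbar ε := Jbar_idem hnn
    have hJ : Jbar ε = σm⁻¹ • QMat ε (maxForestCard ε) := by rw [Jbar]
    rw [add_mul, mul_add, mul_add, Matrix.mul_smul, Matrix.mul_smul, Matrix.mul_sub,
      Matrix.mul_sub, Matrix.mul_smul, Matrix.mul_smul, Matrix.mul_smul, Matrix.mul_smul,
      e1, e2, e3, e4, e5, e6, hJ]
    match_scalars <;> field_simp <;> ring
end Invertible
section Analytic
open Filter Topology
variable {N : ℕ}

lemma tendsto_aux (L J X : Matrix (Fin N) (Fin N) ℝ)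
    (hAr : ∀ τ : ℝ, 0 ≤ τ → (1 + τ • L) * (1 + τ • L)⁻¹ = 1)
    (hLJ : L * J = 0) (hJL : J * L = 0) (hJJ : J * J = J)
    (hX : (L + J) * X = 1) (i j : Fin N) :
    Tendsto (fun τ : ℝ => τ * (((1 + τ • L)⁻¹ - J) i j)) atTop
      (nhds (((L + J)⁻¹ - J) i j)) := by
  have hdet : IsUnit (L + J).det := Matrix.isUnit_det_of_right_inverse hX
  have hdet0 : (L + J).det ≠ 0 := hdet.ne_zero
  -- the key algebraic identity
  have hMinv : ∀ τ : ℝ, 1 ≤ τ →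
      (τ⁻¹ • (1 : Matrix (Fin N) (Fin N) ℝ) + (L + J)) *
        (τ • ((1 + τ • L)⁻¹ - J) + (τ / (1 + τ)) • J) = 1 := by
    intro τ hτ
    have hτ0 : τ ≠ 0 := by linarith
    have hτ1 : (1 + τ) ≠ 0 := by linarith
    have hAQ : (1 + τ • L) * (1 + τ • L)⁻¹ = 1 := hAr τ (by linarith)
    have hAJ : (1 + τ • L) * J = J := by
      rw [add_mul, one_mul, Matrix.smul_mul, hLJ, smul_zero, add_zero]
    have hJA : J * (1 + τ • L) = J := by
      rw [mul_add, mul_one, Matrix.mul_smul, hJL, smul_zero, add_zero]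
    have hJQ : J * (1 + τ • L)⁻¹ = J := by
      calc J * (1 + τ • L)⁻¹ = (J * (1 + τ • L)) * (1 + τ • L)⁻¹ := by rw [hJA]
        _ = J * ((1 + τ • L) * (1 + τ • L)⁻¹) := by rw [mul_assoc]
        _ = J := by rw [hAQ, mul_one]
    have hM : τ⁻¹ • (1 : Matrix (Fin N) (Fin N) ℝ) + (L + J)
        = τ⁻¹ • (1 + τ • L) + J := by
      rw [smul_add, smul_smul, inv_mul_cancel₀ hτ0, one_smul]
      abel
    rw [hM]
    simp only [add_mul, mul_add, Matrix.smul_mul, Matrix.mul_smul, Matrix.mul_sub,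
      hAQ, hAJ, hJQ, hJJ]
    match_scalars <;> (field_simp; try ring)
  have hMinv' : ∀ τ : ℝ, 1 ≤ τ →
      (τ⁻¹ • (1 : Matrix (Fin N) (Fin N) ℝ) + (L + J))⁻¹
        = τ • ((1 + τ • L)⁻¹ - J) + (τ / (1 + τ)) • J :=
    fun τ hτ => Matrix.inv_eq_right_inv (hMinv τ hτ)
  -- limit of M τ
  have hMt : Tendsto (fun τ : ℝ => τ⁻¹ • (1 : Matrix (Fin N) (Fin N) ℝ) + (L + J))
      atTop (nhds (L + J)) := by
    have h1 : Tendsto (fun τ : ℝ => τ⁻¹ • (1 : Matrix (Fin N) (Fin N) ℝ)) atTop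
        (nhds ((0:ℝ) • (1 : Matrix (Fin N) (Fin N) ℝ))) :=
      tendsto_inv_atTop_zero.smul_const _
    rw [zero_smul] at h1
    have := h1.add_const (L + J)
    rwa [zero_add] at this
  have hdett : Tendsto (fun τ : ℝ =>
      (τ⁻¹ • (1 : Matrix (Fin N) (Fin N) ℝ) + (L + J)).det) atTop (nhds (L + J).det) :=
    ((continuous_id.matrix_det).tendsto (L + J)).comp hMt
  have hadjt : Tendsto (fun τ : ℝ =>
      (τ⁻¹ • (1 : Matrix (Fin N) (Fin N) ℝ) + (L + J)).adjugate i j) atTop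
      (nhds ((L + J).adjugate i j)) := by
    have h2 : Tendsto (fun τ : ℝ =>
        (τ⁻¹ • (1 : Matrix (Fin N) (Fin N) ℝ) + (L + J)).adjugate) atTop
        (nhds ((L + J).adjugate)) :=
      ((continuous_id.matrix_adjugate).tendsto (L + J)).comp hMt
    exact ((continuous_apply j).tendsto _).comp (((continuous_apply i).tendsto _).comp h2)
  have hinvt : Tendsto (fun τ : ℝ =>
      ((τ⁻¹ • (1 : Matrix (Fin N) (Fin N) ℝ) + (L + J))⁻¹) i j) atTop
      (nhds (((L + J)⁻¹) i j)) := by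
    have h3 := (hdett.inv₀ hdet0).mul hadjt
    have heq : ∀ A : Matrix (Fin N) (Fin N) ℝ, (A⁻¹) i j = (A.det)⁻¹ * A.adjugate i j := by
      intro A
      rw [Matrix.inv_def, Ring.inverse_eq_inv, Matrix.smul_apply, smul_eq_mul]
    simp only [heq]
    exact h3
  have hsca : Tendsto (fun τ : ℝ => τ / (1 + τ)) atTop (nhds 1) := by
    have h4 : Tendsto (fun τ : ℝ => 1 - (1 + τ)⁻¹) atTop (nhds (1 - 0)) := by
      apply Tendsto.const_sub
      exact tendsto_inv_atTop_zero.comp (tendsto_atTop_add_const_left atTop 1 tendsto_id)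
    rw [sub_zero] at h4
    apply h4.congr'
    filter_upwards [eventually_ge_atTop (1:ℝ)] with τ hτ
    have hτ1 : (1 + τ) ≠ 0 := by linarith
    field_simp
    ring
  have hfinal := hinvt.sub (hsca.mul_const (J i j))
  rw [one_mul] at hfinal
  have : (((L + J)⁻¹) i j - J i j) = ((L + J)⁻¹ - J) i j := by
    rw [Matrix.sub_apply]
  rw [this] at hfinal
  apply hfinal.congr'
  filter_upwards [eventually_ge_atTop (1:ℝ)] with τ hτ
  rw [hMinv' τ hτ]
  rw [Matrix.sub_apply, Matrix.add_apply, Matrix.smul_apply, Matrix.smul_apply,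
    Matrix.sub_apply, smul_eq_mul, smul_eq_mul]
  ring
end Analytic
/-- `τ·((I + τL)⁻¹ − J̄)` converges entrywise, as `τ → ∞`, to the
group inverse `L^# = (L + J̄)⁻¹ − J̄`. -/
theorem group_inverse_as_limit (n : ℕ) (hn : 1 < n) (ε : Fin n → Fin n → ℝ)
    (hnonneg : ∀ i j, 0 ≤ ε i j) (hdiag : ∀ i, ε i i = 0) :
    ∀ i j : Fin n,
      Filter.Tendsto
        (fun τ : ℝ => τ * (((1 + τ • kirchhoff ε)⁻¹ - Jbar ε) i j))
        Filter.atTop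
        (nhds (((kirchhoff ε + Jbar ε)⁻¹ - Jbar ε) i j)) := by
  intro i j
  obtain ⟨X, hX⟩ := LJ_right_inv (ε := ε) hnonneg
  exact tendsto_aux (kirchhoff ε) (Jbar ε) X (fun τ hτ => A_mul_inv hnonneg hτ)
    (L_mul_Jbar hnonneg) (Jbar_mul_L hnonneg) (Jbar_idem hnonneg) hX i j
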